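/- Let G = A *_C B be the free product of groups A and B amalgamated over a common subgroup C, where A ≠ C and B ≠ C. Then the center of G is contained in C. -/

import Mathlib

open Monoid.PushoutI Function List

namespace CenterAmalgam

variable {ι : Type*} {H : Type*} [Group H] {G : ι → Type*} [∀ i, Group (G i)]
  {φ : ∀ i, H →* G i}

theorem chain_of_map_fst_eq {l₁ l₂ : List (Σ i, G i)}
    (h : l₁.map Sigma.fst = l₂.map Sigma.fst)
    (hc : l₁.Chain' fun a b => a.1 ≠ b.1) :
    l₂.Chain' fun a b => a.1 ≠ b.1 := by
  have h1 : (l₁.map Sigma.fst).Chain' (· ≠ ·) := (List.isChain_map _).2 hc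
  rw [h] at h1
  exact (List.isChain_map _).1 h1

theorem ofCoprodI_word_prod (W : Monoid.CoprodI.Word G) :
    ofCoprodI (φ := φ) W.prod
      = (W.toList.map fun p => of (φ := φ) p.1 p.2).prod := by
  rw [Monoid.CoprodI.Word.prod, map_list_prod]
  simp [List.map_map, Function.comp_def, ofCoprodI_of]

theorem wprod_append (c : H) (l : List (Σ i, G i)) (k : ι) (a : G k) (h : H) :
    base φ c * ((l ++ ([⟨k, a⟩] : List (Σ i, G i))).map fun p => of (φ := φ) p.1 p.2).prod
        * base φ h
      = base φ c * ((l ++ ([⟨k, a * φ k h⟩] : List (Σ i, G i))).map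
          fun p => of (φ := φ) p.1 p.2).prod := by
  rw [← of_apply_eq_base φ k h]
  simp [List.prod_append, mul_assoc, ← map_mul]

variable {d : NormalWord.Transversal φ}

theorem normalWord_reduced (w : NormalWord d) : Reduced φ w.toWord := by
  intro p hp hrange
  have hset : p.2 ∈ d.set p.1 := w.normalized p.1 p.2 hp
  have h1 : (((d.compl p.1).equiv p.2).2 : G p.1) = p.2 :=
    (Subgroup.IsComplement.equiv_snd_eq_self_iff_mem (d.compl p.1) (one_mem _)).2 hset
  have h2 : (((d.compl p.1).equiv p.2).2 : G p.1) = 1 :=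
    (Subgroup.IsComplement.coe_equiv_snd_eq_one_iff_mem (d.compl p.1) (d.one_mem _)).2 hrange
  exact w.ne_one p hp (by rw [← h1, h2])

theorem fst_unique (d : NormalWord.Transversal φ) {c₁ c₂ : H} {W₁ W₂ : Monoid.CoprodI.Word G}
    (h₁ : Reduced φ W₁) (h₂ : Reduced φ W₂)
    (heq : base φ c₁ * ofCoprodI W₁.prod = base φ c₂ * ofCoprodI W₂.prod) :
    W₁.toList.map Sigma.fst = W₂.toList.map Sigma.fst := by
  obtain ⟨w₁, hw₁, hm₁⟩ := h₁.exists_normalWord_prod_eq d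
  obtain ⟨w₂, hw₂, hm₂⟩ := h₂.exists_normalWord_prod_eq d
  have hprod : (c₁ • w₁).prod = (c₂ • w₂).prod := by
    rw [NormalWord.prod_base_smul, NormalWord.prod_base_smul, hw₁, hw₂, heq]
  have hl : w₁.toList = w₂.toList :=
    congrArg (fun w => w.toList) (NormalWord.prod_injective hprod)
  rw [← hm₁, ← hm₂, hl]

/-- absorb a base element on the right into the word -/
theorem absorb (c : H) (W : Monoid.CoprodI.Word G) (hW : Reduced φ W) (h : H) :
    ∃ (c' : H) (W' : Monoid.CoprodI.Word G), Reduced φ W' ∧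
      W'.toList.map Sigma.fst = W.toList.map Sigma.fst ∧
      base φ c * ofCoprodI W.prod * base φ h = base φ c' * ofCoprodI W'.prod := by
  rcases List.eq_nil_or_concat W.toList with hnil | ⟨l, p, hl⟩
  · refine ⟨c * h, W, hW, rfl, ?_⟩
    have h0 : ofCoprodI (φ := φ) W.prod = 1 := by
      rw [ofCoprodI_word_prod, hnil]; simp
    rw [h0, map_mul]; group
  · rw [List.concat_eq_append] at hl
    obtain ⟨k, a⟩ := p
    have hamem : (⟨k, a⟩ : Σ i, G i) ∈ W.toList := hl ▸ List.mem_append_right _ (by simp)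
    have hane : a * φ k h ∉ (φ k).range := by
      rintro ⟨u, hu⟩
      exact hW ⟨k, a⟩ hamem ⟨u * h⁻¹, by rw [map_mul, map_inv, hu]; group⟩
    refine ⟨c, Monoid.CoprodI.Word.mk (l ++ [⟨k, a * φ k h⟩]) ?_ ?_, ?_, ?_, ?_⟩
    · intro q hq
      rcases List.mem_append.1 hq with hq | hq
      · exact W.ne_one q (hl ▸ List.mem_append_left _ hq)
      · rcases List.mem_singleton.1 hq with rfl
        exact fun h1 => hane ⟨1, by rw [map_one]; exact h1.symm⟩
    · refine chain_of_map_fst_eq (l₁ := W.toList) ?_ W.chain_ne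
      rw [hl]; simp
    · intro q hq
      rcases List.mem_append.1 hq with hq | hq
      · exact hW q (hl ▸ List.mem_append_left _ hq)
      · rcases List.mem_singleton.1 hq with rfl
        exact hane
    · show (l ++ ([⟨k, a * φ k h⟩] : List (Σ i, G i))).map Sigma.fst = _
      rw [hl]; simp
    · conv_lhs => rw [ofCoprodI_word_prod, hl]
      conv_rhs => rw [ofCoprodI_word_prod]
      exact wprod_append c l k a h

end CenterAmalgam

open CenterAmalgam

/-- Let `G = A *_C B` be the amalgamated free product of two groups (the family `G i`, `i : Bool`)
over a common subgroup `C` (embedded via injective homomorphisms `φ i`), with neither inclusion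
surjective. Then the center of the pushout is contained in (the image of) `C`. -/
theorem center_le_base_of_amalgamated
    {C : Type*} [Group C] {G : Bool → Type*} [∀ i, Group (G i)]
    (φ : ∀ i, C →* G i)
    (hinj : ∀ i, Function.Injective (φ i))
    (hnsurj : ∀ i, ¬ Function.Surjective (φ i)) :
    Subgroup.center (Monoid.PushoutI φ) ≤ (Monoid.PushoutI.base φ).range := by
  classical
  obtain ⟨d⟩ := Monoid.PushoutI.NormalWord.transversal_nonempty φ hinj
  intro z hz
  rw [Subgroup.mem_center_iff] at hz
  set w₀ : NormalWord d := z • NormalWord.empty with hw₀def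
  have hzw : base φ w₀.head * ofCoprodI w₀.toWord.prod = z := by
    have h1 : w₀.prod = z := by
      rw [hw₀def, NormalWord.prod_smul, NormalWord.prod_empty, mul_one]
    rw [← h1]; rfl
  have hred : Reduced φ w₀.toWord := normalWord_reduced w₀
  rcases hn : w₀.toList with _ | ⟨⟨i₀, b⟩, rest⟩
  · refine ⟨w₀.head, ?_⟩
    rw [← hzw, ofCoprodI_word_prod, hn]
    simp
  · exfalso
    have hji : (!i₀) ≠ i₀ := by cases i₀ <;> simp
    obtain ⟨g, hg⟩ : ∃ g, g ∉ (φ (!i₀)).range := by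
      by_contra h
      push_neg at h
      exact hnsurj (!i₀) fun y => MonoidHom.mem_range.1 (h y)
    have hm : g * φ (!i₀) w₀.head ∉ (φ (!i₀)).range := by
      rintro ⟨u, hu⟩
      exact hg ⟨u * w₀.head⁻¹, by rw [map_mul, map_inv, hu]; group⟩
    have hm1 : g * φ (!i₀) w₀.head ≠ 1 := fun h => hm ⟨1, by rw [map_one]; exact h.symm⟩
    have hIdx : w₀.toWord.fstIdx ≠ some (!i₀) := by
      rw [Monoid.CoprodI.Word.fstIdx, hn]
      simpa using hji.symm
    have hW₁red : Reduced φ (Monoid.CoprodI.Word.cons _ w₀.toWord hIdx hm1) := by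
      intro q hq
      rcases List.mem_cons.1 hq with rfl | hq
      · exact hm
      · exact hred q hq
    have hA : Monoid.PushoutI.of (φ := φ) (!i₀) g * z
        = base φ 1 * ofCoprodI (Monoid.CoprodI.Word.cons _ w₀.toWord hIdx hm1).prod := by
      rw [map_one, one_mul, Monoid.CoprodI.Word.prod_cons, map_mul, ofCoprodI_of, ← hzw,
        ← mul_assoc]
      congr 1
      rw [← of_apply_eq_base φ (!i₀), ← map_mul]
    -- decompose the word from the right
    have hnnil : w₀.toList ≠ [] := by rw [hn]; simp
    rcases List.eq_nil_or_concat w₀.toList with h' | ⟨l, p, hl⟩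
    · exact hnnil h'
    rw [List.concat_eq_append] at hl
    obtain ⟨k, a⟩ := p
    have hlne : ∀ q ∈ l, q.snd ≠ 1 := fun q hq => w₀.ne_one q (hl ▸ mem_append_left _ hq)
    have hlch : l.Chain' (fun x y => x.1 ≠ y.1) := by
      have hc := w₀.chain_ne
      rw [hl] at hc
      exact hc.left_of_append
    have hzkey : z * Monoid.PushoutI.of (φ := φ) (!i₀) g
        = base φ w₀.head * ((l.map fun p => Monoid.PushoutI.of (φ := φ) p.1 p.2).prod
            * (Monoid.PushoutI.of (φ := φ) k a * Monoid.PushoutI.of (φ := φ) (!i₀) g)) := by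
      conv_lhs => rw [← hzw, ofCoprodI_word_prod, hl]
      simp [List.prod_append, mul_assoc]
    -- the commutation equation
    have hcomm := hz (Monoid.PushoutI.of (φ := φ) (!i₀) g)
    by_cases hkj : k = !i₀
    · subst hkj
      by_cases hag : a * g ∈ (φ (!i₀)).range
      · -- full cancellation at the end
        obtain ⟨u, hu⟩ := hag
        have hlred : Reduced φ (Monoid.CoprodI.Word.mk l hlne hlch) :=
          fun q hq => hred q (hl ▸ mem_append_left _ hq)
        obtain ⟨c', W', hW'red, hW'fst, hW'eq⟩ :=
          absorb w₀.head (Monoid.CoprodI.Word.mk l hlne hlch) hlred u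
        have hzx : z * Monoid.PushoutI.of (φ := φ) (!i₀) g
            = base φ c' * ofCoprodI W'.prod := by
          rw [← hW'eq, hzkey]
          conv_rhs => rw [ofCoprodI_word_prod]
          rw [← map_mul, ← hu, of_apply_eq_base, mul_assoc]
        have hfst := fst_unique d hW₁red hW'red (by rw [← hA, hcomm, hzx])
        have hfst2 : (!i₀) :: w₀.toList.map Sigma.fst = W'.toList.map Sigma.fst := hfst
        have hfst3 : (!i₀) :: w₀.toList.map Sigma.fst = l.map Sigma.fst :=
          hfst2.trans hW'fst
        have hlen := congrArg List.length hfst3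
        rw [hl] at hlen
        simp only [List.length_cons, List.length_map, List.length_append,
          List.length_singleton] at hlen
        omega
      · -- last letter absorbs g
        have hne2 : ∀ q ∈ l ++ [(⟨!i₀, a * g⟩ : Σ i, G i)], q.snd ≠ 1 := by
          intro q hq
          rcases List.mem_append.1 hq with hq | hq
          · exact hlne q hq
          · rcases List.mem_singleton.1 hq with rfl
            exact fun h1 => hag ⟨1, by rw [map_one]; exact h1.symm⟩
        have hch2 : (l ++ [(⟨!i₀, a * g⟩ : Σ i, G i)]).IsChain (fun x y => x.1 ≠ y.1) := by
          refine chain_of_map_fst_eq (l₁ := w₀.toList) ?_ w₀.chain_ne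
          rw [hl]; simp
        have hred2 : Reduced φ (Monoid.CoprodI.Word.mk (l ++ [⟨!i₀, a * g⟩]) hne2 hch2) := by
          intro q hq
          rcases List.mem_append.1 hq with hq | hq
          · exact hred q (hl ▸ mem_append_left _ hq)
          · rcases List.mem_singleton.1 hq with rfl
            exact hag
        have hzx : z * Monoid.PushoutI.of (φ := φ) (!i₀) g
            = base φ w₀.head
              * ofCoprodI (Monoid.CoprodI.Word.mk (l ++ [⟨!i₀, a * g⟩]) hne2 hch2).prod := by
          rw [hzkey]
          conv_rhs => rw [ofCoprodI_word_prod]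
          show _ = base φ w₀.head
            * ((l ++ [(⟨!i₀, a * g⟩ : Σ i, G i)]).map
                fun p => Monoid.PushoutI.of (φ := φ) p.1 p.2).prod
          rw [← map_mul]
          simp [List.prod_append, mul_assoc]
        have hfst := fst_unique d hW₁red hred2 (by rw [← hA, hcomm, hzx])
        have hfst2 : (!i₀) :: w₀.toList.map Sigma.fst
            = (l ++ [(⟨!i₀, a * g⟩ : Σ i, G i)]).map Sigma.fst := hfst
        have hlen := congrArg List.length hfst2
        rw [hl] at hlen
        simp only [List.length_cons, List.length_map, List.length_append,
          List.length_singleton] at hlen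
        omega
    · -- no cancellation: append at the end
      have hne3 : ∀ q ∈ w₀.toList ++ [(⟨!i₀, g⟩ : Σ i, G i)], q.snd ≠ 1 := by
        intro q hq
        rcases List.mem_append.1 hq with hq | hq
        · exact w₀.ne_one q hq
        · rcases List.mem_singleton.1 hq with rfl
          exact fun h1 => hg ⟨1, by rw [map_one]; exact h1.symm⟩
      have hch3 : (w₀.toList ++ [(⟨!i₀, g⟩ : Σ i, G i)]).IsChain (fun x y => x.1 ≠ y.1) := by
        rw [List.isChain_append]
        refine ⟨w₀.chain_ne, List.isChain_singleton _, ?_⟩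
        intro x hx y hy
        rw [hl] at hx
        simp at hx hy
        subst hy
        subst hx
        simpa using hkj
      have hred3 : Reduced φ (Monoid.CoprodI.Word.mk (w₀.toList ++ [⟨!i₀, g⟩]) hne3 hch3) := by
        intro q hq
        rcases List.mem_append.1 hq with hq | hq
        · exact hred q hq
        · rcases List.mem_singleton.1 hq with rfl
          exact hg
      have hzx : z * Monoid.PushoutI.of (φ := φ) (!i₀) g
          = base φ w₀.head
            * ofCoprodI (Monoid.CoprodI.Word.mk (w₀.toList ++ [⟨!i₀, g⟩]) hne3 hch3).prod := by
        conv_lhs => rw [← hzw, ofCoprodI_word_prod]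
        conv_rhs => rw [ofCoprodI_word_prod]
        show _ = base φ w₀.head
          * ((w₀.toList ++ [(⟨!i₀, g⟩ : Σ i, G i)]).map
              fun p => Monoid.PushoutI.of (φ := φ) p.1 p.2).prod
        simp [List.prod_append, mul_assoc]
      have hfst := fst_unique d hW₁red hred3 (by rw [← hA, hcomm, hzx])
      have hfst2 : (!i₀) :: w₀.toList.map Sigma.fst
          = (w₀.toList ++ [(⟨!i₀, g⟩ : Σ i, G i)]).map Sigma.fst := hfst
      rw [hn] at hfst2
      have hhead := congrArg List.head? hfst2
      simp only [List.map_cons, List.map_append, List.head?_cons, List.cons_append] at hhead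
      exact hji (Option.some.inj hhead)
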